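/- arXiv:2111.00499 — 6 statements merged into one kernel-verified Lean document; each statement's English description precedes it below -/
import Mathlib

section
/- Let α ∈ Z̄ be an algebraic integer. Then q(α) ≤ 1 if and only if α = 0 or α is a root of unity; moreover every root of unity ζ satisfies q(ζ) = 1. In particular q(α) ≥ 1 for every nonzero algebraic integer α, and the infimum of q(α) over nonzero α ∈ Z̄ equals 1. -/
open scoped ComplexConjugate ComplexOrder

noncomputable section

/-- An algebraic closure of `ℚ`. -/
abbrev Qbar : Type := AlgebraicClosure ℚ

/-- The ring of algebraic integers inside `Qbar`. -/
def Zbar : Subring Qbar := (integralClosure ℤ Qbar).toSubring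

/-- The subfield `ℚ(α, β)` of `Qbar`. -/
def Qbar.field2 (α β : Qbar) : IntermediateField ℚ Qbar :=
  IntermediateField.adjoin ℚ {α, β}

instance (α β : Qbar) : FiniteDimensional ℚ (Qbar.field2 α β) := by
  exact IntermediateField.finiteDimensional_adjoin fun x _ =>
    IsAlgebraic.isIntegral ((AlgebraicClosure.isAlgebraic ℚ).isAlgebraic x)

theorem Qbar.mem_field2_left (α β : Qbar) : α ∈ Qbar.field2 α β :=
  IntermediateField.subset_adjoin ℚ _ (Set.mem_insert _ _)

theorem Qbar.mem_field2_right (α β : Qbar) : β ∈ Qbar.field2 α β :=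
  IntermediateField.subset_adjoin ℚ _ (Set.mem_insert_of_mem _ rfl)

/-- The normalized inner product on `Qbar`:
`⟨α, β⟩ = (1/[L:ℚ]) ∑_{σ : L → ℂ} σ(α) * conj (σ(β))` with `L = ℚ(α, β)`. -/
def qInner (α β : Qbar) : ℂ :=
  (Module.finrank ℚ (Qbar.field2 α β) : ℂ)⁻¹ *
    ∑ σ : Qbar.field2 α β →ₐ[ℚ] ℂ,
      σ ⟨α, Qbar.mem_field2_left α β⟩ * conj (σ ⟨β, Qbar.mem_field2_right α β⟩)

/-- `(β, γ)` is a decomposition of `α` in `Zbar`. -/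
def IsDecompositionOf (α β γ : Qbar) : Prop :=
  β ∈ Zbar ∧ γ ∈ Zbar ∧ α = β + γ ∧ 0 ≤ qInner β γ

/-- `α` is an indecomposable algebraic integer. -/
def IsIndecomposable (α : Qbar) : Prop :=
  α ∈ Zbar ∧ α ≠ 0 ∧ ∀ β γ : Qbar, IsDecompositionOf α β γ → β = 0 ∨ γ = 0

/-- `ζ` is a root of unity in `Qbar`. -/
def IsRootOfUnity (ζ : Qbar) : Prop := ∃ n : ℕ, 0 < n ∧ ζ ^ n = 1

/-! For a nonzero algebraic integer `α`, `q(α)` is the arithmetic mean of the numbers `|σ α|²` over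
the embeddings `σ` of `ℚ(α)` into `ℂ`, whose product is `N(α)² ≥ 1` since the norm `N(α)` is a
nonzero integer. By AM–GM (in the form `log x ≤ x - 1`) the mean is at least `1`, with equality
only when every conjugate of `α` has absolute value `1`; by Kronecker's theorem `α` is then a root
of unity. -/

namespace Real

variable {ι : Type*} [Fintype ι] {f : ι → ℝ}

theorem sum_log_le_sum_sub_card (hf : ∀ i, 0 < f i) :
    ∑ i, log (f i) ≤ ∑ i, f i - Fintype.card ι := by
  rw [← Finset.card_univ, ← nsmul_one, ← Finset.sum_const, ← Finset.sum_sub_distrib]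
  exact Finset.sum_le_sum fun i _ => log_le_sub_one_of_pos (hf i)

theorem sum_log_lt_sum_sub_card (hf : ∀ i, 0 < f i) (hne : ∃ i, f i ≠ 1) :
    ∑ i, log (f i) < ∑ i, f i - Fintype.card ι := by
  obtain ⟨i, hi⟩ := hne
  rw [← Finset.card_univ, ← nsmul_one, ← Finset.sum_const, ← Finset.sum_sub_distrib]
  exact Finset.sum_lt_sum (fun i _ => log_le_sub_one_of_pos (hf i))
    ⟨i, Finset.mem_univ i, log_lt_sub_one_of_pos (hf i) hi⟩

theorem card_le_sum_of_one_le_prod (hf : ∀ i, 0 < f i) (hprod : 1 ≤ ∏ i, f i) :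
    (Fintype.card ι : ℝ) ≤ ∑ i, f i := by
  have hlog := log_nonneg hprod
  rw [log_prod fun i _ => (hf i).ne'] at hlog
  linarith [sum_log_le_sum_sub_card hf]

theorem eq_one_of_one_le_prod_of_sum_le_card (hf : ∀ i, 0 < f i) (hprod : 1 ≤ ∏ i, f i)
    (hsum : ∑ i, f i ≤ Fintype.card ι) (i : ι) : f i = 1 := by
  have hlog := log_nonneg hprod
  rw [log_prod fun i _ => (hf i).ne'] at hlog
  by_contra hi
  linarith [sum_log_lt_sum_sub_card hf ⟨i, hi⟩]

end Real

namespace NumberField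

variable {K : Type*} [Field K] [NumberField K] {x : K}

theorem one_le_abs_norm {a : 𝓞 K} (ha : a ≠ 0) : 1 ≤ |Algebra.norm ℚ (a : K)| := by
  rw [← Algebra.coe_norm_int, ← Int.cast_one, ← Int.cast_abs, Int.cast_le]
  exact Int.one_le_abs (Algebra.norm_ne_zero_iff.mpr ha)

theorem prod_norm_embeddings_sq (x : K) :
    ∏ σ : K →ₐ[ℚ] ℂ, ‖σ x‖ ^ 2 = (Algebra.norm ℚ x : ℝ) ^ 2 := by
  rw [Finset.prod_pow, ← norm_prod, ← Algebra.norm_eq_prod_embeddings, eq_ratCast,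
    Complex.norm_ratCast, sq_abs]

theorem one_le_prod_norm_embeddings_sq (hx : IsIntegral ℤ x) (h0 : x ≠ 0) :
    1 ≤ ∏ σ : K →ₐ[ℚ] ℂ, ‖σ x‖ ^ 2 := by
  have h1 := one_le_abs_norm (a := ⟨x, hx⟩) (ne_of_apply_ne ((↑) : 𝓞 K → K) h0)
  rw [prod_norm_embeddings_sq, ← sq_abs]
  exact one_le_pow₀ (by exact_mod_cast h1)

theorem sq_norm_embedding_pos (σ : K →ₐ[ℚ] ℂ) (h0 : x ≠ 0) : 0 < ‖σ x‖ ^ 2 := by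
  positivity [(map_ne_zero σ).mpr h0]

theorem finrank_le_sum_norm_embeddings_sq (hx : IsIntegral ℤ x) (h0 : x ≠ 0) :
    (Module.finrank ℚ K : ℝ) ≤ ∑ σ : K →ₐ[ℚ] ℂ, ‖σ x‖ ^ 2 := by
  rw [← AlgHom.card ℚ K ℂ]
  exact Real.card_le_sum_of_one_le_prod (fun σ => sq_norm_embedding_pos σ h0)
    (one_le_prod_norm_embeddings_sq hx h0)

theorem exists_pow_eq_one_of_sum_norm_embeddings_sq_le_finrank (hx : IsIntegral ℤ x)
    (h0 : x ≠ 0) (hsum : ∑ σ : K →ₐ[ℚ] ℂ, ‖σ x‖ ^ 2 ≤ Module.finrank ℚ K) :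
    ∃ n, 0 < n ∧ x ^ n = 1 := by
  rw [← AlgHom.card ℚ K ℂ] at hsum
  have hσ := Real.eq_one_of_one_le_prod_of_sum_le_card (fun σ => sq_norm_embedding_pos σ h0)
    (one_le_prod_norm_embeddings_sq hx h0) hsum
  obtain ⟨n, hn, hxn⟩ := Embeddings.pow_eq_one_of_norm_eq_one K ℂ hx fun φ =>
    (pow_eq_one_iff_of_nonneg (norm_nonneg _) two_ne_zero).mp (hσ φ.toRatAlgHom)
  exact ⟨n, hn, hxn⟩

theorem sum_norm_embeddings_sq_of_pow_eq_one {n : ℕ} (hn : n ≠ 0) (hxn : x ^ n = 1) :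
    ∑ σ : K →ₐ[ℚ] ℂ, ‖σ x‖ ^ 2 = Module.finrank ℚ K := by
  have hσ (σ : K →ₐ[ℚ] ℂ) : ‖σ x‖ = 1 :=
    Complex.norm_eq_one_of_pow_eq_one (by rw [← map_pow, hxn, map_one]) hn
  simp [hσ]

end NumberField

instance (α β : Qbar) : NumberField (Qbar.field2 α β) where

namespace Qbar

theorem qInner_self (α : Qbar) :
    qInner α α = ((∑ σ : field2 α α →ₐ[ℚ] ℂ, ‖σ ⟨α, mem_field2_left α α⟩‖ ^ 2) /
      Module.finrank ℚ (field2 α α) : ℝ) := by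
  simp [qInner, Complex.mul_conj', inv_mul_eq_div]

theorem isIntegral_field2_iff {α : Qbar} :
    IsIntegral ℤ (⟨α, mem_field2_left α α⟩ : field2 α α) ↔ α ∈ Zbar :=
  (isIntegral_algebraMap_iff (algebraMap (field2 α α) Qbar).injective).symm

theorem one_le_qInner_self {α : Qbar} (hα : α ∈ Zbar) (h0 : α ≠ 0) : 1 ≤ qInner α α := by
  rw [qInner_self, ← Complex.ofReal_one, Complex.real_le_real,
    one_le_div₀ (mod_cast Module.finrank_pos)]
  exact NumberField.finrank_le_sum_norm_embeddings_sq (isIntegral_field2_iff.mpr hα)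
    (Subtype.coe_ne_coe.mp h0)

theorem isRootOfUnity_of_qInner_self_le_one {α : Qbar} (hα : α ∈ Zbar) (h0 : α ≠ 0)
    (hq : qInner α α ≤ 1) : IsRootOfUnity α := by
  rw [qInner_self, ← Complex.ofReal_one, Complex.real_le_real,
    div_le_one₀ (mod_cast Module.finrank_pos)] at hq
  obtain ⟨n, hn, hαn⟩ := NumberField.exists_pow_eq_one_of_sum_norm_embeddings_sq_le_finrank
    (isIntegral_field2_iff.mpr hα) (Subtype.coe_ne_coe.mp h0) hq
  exact ⟨n, hn, congrArg Subtype.val hαn⟩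

theorem qInner_self_of_isRootOfUnity {ζ : Qbar} (hζ : IsRootOfUnity ζ) : qInner ζ ζ = 1 := by
  obtain ⟨n, hn, hζn⟩ := hζ
  rw [qInner_self, NumberField.sum_norm_embeddings_sq_of_pow_eq_one hn.ne' (Subtype.ext hζn),
    div_self (mod_cast Module.finrank_pos.ne'), Complex.ofReal_one]

end Qbar

open Qbar in
/-- For an algebraic integer `α` we have `q(α) ≤ 1` iff `α = 0` or `α` is a root of unity;
roots of unity have `q = 1`; `q(α) ≥ 1` for nonzero algebraic integers `α`, and the infimum
of `q` over the nonzero algebraic integers is `1`. -/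
theorem q_le_one_iff_zero_or_rootOfUnity :
    (∀ α : Qbar, α ∈ Zbar → (qInner α α ≤ 1 ↔ α = 0 ∨ IsRootOfUnity α)) ∧
    (∀ ζ : Qbar, IsRootOfUnity ζ → qInner ζ ζ = 1) ∧
    (∀ α : Qbar, α ∈ Zbar → α ≠ 0 → (1 : ℂ) ≤ qInner α α) ∧
    IsGLB {x : ℝ | ∃ α : Qbar, α ∈ Zbar ∧ α ≠ 0 ∧ qInner α α = (x : ℂ)} 1 := by
  refine ⟨fun α hα => ⟨fun hq => ?_, ?_⟩, fun ζ => qInner_self_of_isRootOfUnity,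
    fun α => one_le_qInner_self, IsLeast.isGLB ⟨?_, ?_⟩⟩
  · exact or_iff_not_imp_left.mpr fun h0 => isRootOfUnity_of_qInner_self_le_one hα h0 hq
  · rintro (rfl | hζ)
    · simp [qInner_self, show (⟨0, mem_field2_left 0 0⟩ : field2 0 0) = 0 from rfl]
    · exact (qInner_self_of_isRootOfUnity hζ).le
  · exact ⟨1, one_mem Zbar, one_ne_zero, by
      simp [qInner_self_of_isRootOfUnity ⟨1, one_pos, one_pow 1⟩]⟩
  · rintro x ⟨α, hα, h0, hx⟩
    exact_mod_cast hx ▸ one_le_qInner_self hα h0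

end
end

section
/- Let α ∈ Z̄ be an algebraic integer. (i) If 0 < q(α) < 2, then α is indecomposable. (ii) If q(α) = 2, then α has a nontrivial decomposition if and only if α = ζ + ξ for some roots of unity ζ, ξ ∈ Z̄; in that case ⟨ζ, ξ⟩ = 0, the pair {ζ, ξ} is uniquely determined by α up to ordering, and [ℚ(α, ζ) : ℚ(α)] ≤ 2. -/
open scoped ComplexConjugate ComplexOrder

noncomputable section

/-- The subfield `ℚ(α)` of `Qbar`. -/
def Qbar.field1 (α : Qbar) : IntermediateField ℚ Qbar := IntermediateField.adjoin ℚ {α}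

/-!
In a number field `L` of degree `n` containing `x`, `q(x) = n⁻¹ ∑_σ ‖σ x‖²`; this does not depend
on `L` because every embedding of a subfield `M` extends in exactly `[L : M]` ways. For a nonzero
algebraic integer `|N(x)| ≥ 1`, so AM–GM gives `q(x) ≥ 1`, with equality iff every conjugate has
absolute value `1`, i.e. (Kronecker) iff `x` is a root of unity. Since
`q(β + γ) = q(β) + q(γ) + 2⟨β, γ⟩`, a nontrivial decomposition forces `q(α) ≥ 2`, and equality
forces `β, γ` to be orthogonal roots of unity. Two complex numbers of absolute value `1` are
determined up to order by their nonzero sum; hence every `ℚ(α)`-embedding of `ℚ(α, ζ)` sends `ζ`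
to `ζ` or `ξ`, and `[ℚ(α, ζ) : ℚ(α)] ≤ 2`.
-/

open Module IntermediateField

section EmbeddingInner

variable {K : Type*} [Field K] [Algebra ℚ K] [FiniteDimensional ℚ K]

variable (K) in
def embeddingInner (x y : K) : ℂ :=
  ∑ σ : K →ₐ[ℚ] ℂ, σ x * conj (σ y)

-- Complex conjugation permutes the embeddings, so the form is real.
theorem embeddingInner_comm (x y : K) : embeddingInner K y x = embeddingInner K x y := by
  let c : ℂ →ₐ[ℚ] ℂ := (starRingEnd ℂ).toRatAlgHom
  have hc : Function.Involutive (c.comp : (K →ₐ[ℚ] ℂ) → K →ₐ[ℚ] ℂ) :=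
    fun σ => AlgHom.ext fun z => Complex.conj_conj (σ z)
  exact Fintype.sum_equiv hc.toPerm _ _ fun σ => by simp [c, mul_comm]

theorem embeddingInner_add_self (x y : K) :
    embeddingInner K (x + y) (x + y) =
      embeddingInner K x x + embeddingInner K y y + 2 * embeddingInner K x y := by
  have h := embeddingInner_comm x y
  simp only [embeddingInner, map_add, add_mul, mul_add, Finset.sum_add_distrib] at h ⊢
  rw [h]
  ring

theorem embeddingInner_self (x : K) :
    embeddingInner K x x = ((∑ σ : K →ₐ[ℚ] ℂ, ‖σ x‖ ^ 2 : ℝ) : ℂ) := by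
  simp [embeddingInner, Complex.mul_conj']

theorem embeddingInner_algebraMap (M : Type*) [Field M] [Algebra ℚ M] [FiniteDimensional ℚ M]
    [Algebra M K] [IsScalarTower ℚ M K] (x y : M) :
    embeddingInner K (algebraMap M K x) (algebraMap M K y) =
      finrank M K * embeddingInner M x y := by
  have : FiniteDimensional M K := .right ℚ M K
  have : CharZero M := charZero_of_injective_algebraMap (algebraMap ℚ M).injective
  rw [embeddingInner, ← (algHomEquivSigma (B := M)).symm.sum_comp, ← Finset.univ_sigma_univ,
    Finset.sum_sigma, embeddingInner, Finset.mul_sum]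
  refine Finset.sum_congr rfl fun τ _ => ?_
  let := τ.toRingHom.toAlgebra
  have h : ∀ (g : K →ₐ[M] ℂ) (z : M), algHomEquivSigma.symm ⟨τ, g⟩ (algebraMap M K z) = τ z :=
    fun g z => g.commutes z
  simp only [h, Finset.sum_const, Finset.card_univ, nsmul_eq_mul]
  rw [AlgHom.card]

end EmbeddingInner

theorem zero_le_sum_log_of_one_le_prod {ι : Type*} [Fintype ι] {t : ι → ℝ} (ht : ∀ i, 0 < t i)
    (h : 1 ≤ ∏ i, t i) : 0 ≤ ∑ i, Real.log (t i) := by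
  rw [← Real.log_prod fun i _ => (ht i).ne']
  exact Real.log_nonneg h

theorem card_le_sum_of_one_le_prod {ι : Type*} [Fintype ι] {t : ι → ℝ} (ht : ∀ i, 0 < t i)
    (h : 1 ≤ ∏ i, t i) : (Fintype.card ι : ℝ) ≤ ∑ i, t i := by
  have hlog := zero_le_sum_log_of_one_le_prod ht h
  have := Finset.sum_le_sum fun i (_ : i ∈ Finset.univ) => Real.log_le_sub_one_of_pos (ht i)
  simp only [Finset.sum_sub_distrib, Finset.sum_const, Finset.card_univ, nsmul_eq_mul,
    mul_one] at this
  linarith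

theorem eq_one_of_sum_eq_card_of_one_le_prod {ι : Type*} [Fintype ι] {t : ι → ℝ}
    (ht : ∀ i, 0 < t i) (h : 1 ≤ ∏ i, t i) (hsum : ∑ i, t i = Fintype.card ι) (i : ι) :
    t i = 1 := by
  by_contra hi
  have hlog := zero_le_sum_log_of_one_le_prod ht h
  have := Finset.sum_lt_sum (fun j (_ : j ∈ Finset.univ) => Real.log_le_sub_one_of_pos (ht j))
    ⟨i, Finset.mem_univ i, Real.log_lt_sub_one_of_pos (ht i) hi⟩
  simp only [Finset.sum_sub_distrib, Finset.sum_const, Finset.card_univ, nsmul_eq_mul,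
    mul_one] at this
  linarith

theorem numberField_of_finiteDimensional (K : Type*) [Field K] [Algebra ℚ K]
    [FiniteDimensional ℚ K] : NumberField K := by
  have : CharZero K := charZero_of_injective_algebraMap (algebraMap ℚ K).injective
  obtain rfl : ‹Algebra ℚ K› = DivisionRing.toRatAlgebra := Subsingleton.elim _ _
  exact ⟨⟩

section Embeddings

variable {K : Type*} [Field K] [Algebra ℚ K]

theorem norm_sq_algHom_pos {x : K} (hx0 : x ≠ 0) (σ : K →ₐ[ℚ] ℂ) : 0 < ‖σ x‖ ^ 2 := by
  have : σ x ≠ 0 := (map_ne_zero σ).2 hx0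
  positivity

variable [FiniteDimensional ℚ K]

theorem one_le_prod_norm_algHom {x : K} (hx : IsIntegral ℤ x) (hx0 : x ≠ 0) :
    1 ≤ ∏ σ : K →ₐ[ℚ] ℂ, ‖σ x‖ := by
  obtain ⟨m, hm⟩ := IsIntegrallyClosed.isIntegral_iff.mp (Algebra.isIntegral_norm ℚ hx)
  have hm0 : m ≠ 0 := by
    rintro rfl
    exact hx0 (by simpa using hm.symm)
  rw [← norm_prod, ← Algebra.norm_eq_prod_embeddings, ← hm]
  simpa using (Int.cast_le (R := ℝ)).2 (Int.one_le_abs hm0)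

theorem one_le_prod_norm_sq_algHom {x : K} (hx : IsIntegral ℤ x) (hx0 : x ≠ 0) :
    1 ≤ ∏ σ : K →ₐ[ℚ] ℂ, ‖σ x‖ ^ 2 := by
  rw [Finset.prod_pow]
  exact one_le_pow₀ (one_le_prod_norm_algHom hx hx0)

theorem finrank_le_sum_norm_sq {x : K} (hx : IsIntegral ℤ x) (hx0 : x ≠ 0) :
    (finrank ℚ K : ℝ) ≤ ∑ σ : K →ₐ[ℚ] ℂ, ‖σ x‖ ^ 2 := by
  rw [← AlgHom.card ℚ K ℂ]
  exact card_le_sum_of_one_le_prod (norm_sq_algHom_pos hx0) (one_le_prod_norm_sq_algHom hx hx0)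

theorem sum_norm_sq_of_pow_eq_one {x : K} {n : ℕ} (hn : n ≠ 0) (hx : x ^ n = 1) :
    ∑ σ : K →ₐ[ℚ] ℂ, ‖σ x‖ ^ 2 = finrank ℚ K := by
  have hσ : ∀ σ : K →ₐ[ℚ] ℂ, ‖σ x‖ = 1 := fun σ =>
    Complex.norm_eq_one_of_pow_eq_one (by rw [← map_pow, hx, map_one]) hn
  simp [hσ]

theorem exists_pow_eq_one_of_sum_norm_sq_eq_finrank {x : K} (hx : IsIntegral ℤ x) (hx0 : x ≠ 0)
    (h : ∑ σ : K →ₐ[ℚ] ℂ, ‖σ x‖ ^ 2 = finrank ℚ K) : ∃ n, 0 < n ∧ x ^ n = 1 := by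
  have : NumberField K := numberField_of_finiteDimensional K
  have hσ : ∀ σ : K →ₐ[ℚ] ℂ, ‖σ x‖ = 1 := fun σ =>
    (pow_eq_one_iff_of_nonneg (norm_nonneg _) two_ne_zero).1 <|
      eq_one_of_sum_eq_card_of_one_le_prod (norm_sq_algHom_pos hx0)
        (one_le_prod_norm_sq_algHom hx hx0) (by rw [h, AlgHom.card]) σ
  obtain ⟨n, hn, hxn⟩ :=
    NumberField.Embeddings.pow_eq_one_of_norm_eq_one K ℂ hx fun φ => hσ φ.toRatAlgHom
  exact ⟨n, hn, hxn⟩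

end Embeddings

theorem isIntegral_mk_of_mem_Zbar {L : IntermediateField ℚ Qbar} {x : Qbar} (hx : x ∈ Zbar)
    (hxL : x ∈ L) : IsIntegral ℤ (⟨x, hxL⟩ : L) :=
  (isIntegral_algebraMap_iff Subtype.val_injective).1 hx

namespace IsRootOfUnity

variable {ζ : Qbar}

theorem isIntegral (R : Type*) [CommRing R] [Algebra R Qbar] (h : IsRootOfUnity ζ) :
    IsIntegral R ζ := by
  obtain ⟨n, hn, hζ⟩ := h
  exact IsIntegral.of_pow hn (hζ ▸ isIntegral_one)

theorem mem_Zbar (h : IsRootOfUnity ζ) : ζ ∈ Zbar :=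
  h.isIntegral ℤ

theorem ne_zero (h : IsRootOfUnity ζ) : ζ ≠ 0 := by
  obtain ⟨n, hn, hζ⟩ := h
  rintro rfl
  simp [zero_pow hn.ne'] at hζ

theorem algHom_apply {F : Type*} [Field F] [Algebra F Qbar] {E : IntermediateField F Qbar}
    (τ : E →ₐ[F] Qbar) {x : E} (hx : IsRootOfUnity x) : IsRootOfUnity (τ x) := by
  obtain ⟨n, hn, h⟩ := hx
  exact ⟨n, hn, by rw [← map_pow, show x ^ n = 1 from Subtype.ext h, map_one]⟩

end IsRootOfUnity

theorem qInner_eq_of_mem (L : IntermediateField ℚ Qbar) [FiniteDimensional ℚ L] {α β : Qbar}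
    (hα : α ∈ L) (hβ : β ∈ L) :
    qInner α β = (finrank ℚ L : ℂ)⁻¹ * embeddingInner L ⟨α, hα⟩ ⟨β, hβ⟩ := by
  let M := Qbar.field2 α β
  have hML : M ≤ L :=
    adjoin_le_iff.2 (Set.insert_subset_iff.2 ⟨hα, Set.singleton_subset_iff.2 hβ⟩)
  let := (inclusion hML).toAlgebra
  have : IsScalarTower ℚ M L := .of_algebraMap_eq' rfl
  have : FiniteDimensional M L := .right ℚ M L
  have : Module.Free M L := .of_divisionRing M L
  have : (finrank ℚ M : ℂ) ≠ 0 := Nat.cast_ne_zero.2 finrank_pos.ne'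
  have : (finrank M L : ℂ) ≠ 0 := Nat.cast_ne_zero.2 finrank_pos.ne'
  rw [show qInner α β = (finrank ℚ M : ℂ)⁻¹ * embeddingInner M
      ⟨α, Qbar.mem_field2_left α β⟩ ⟨β, Qbar.mem_field2_right α β⟩ from rfl,
    ← finrank_mul_finrank ℚ M L, show embeddingInner L ⟨α, hα⟩ ⟨β, hβ⟩ =
      embeddingInner L (algebraMap M L ⟨α, Qbar.mem_field2_left α β⟩)
        (algebraMap M L ⟨β, Qbar.mem_field2_right α β⟩) from rfl,
    embeddingInner_algebraMap]
  push_cast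
  field_simp

theorem qInner_zero_left (β : Qbar) : qInner 0 β = 0 := by
  rw [qInner_eq_of_mem _ (zero_mem (Qbar.field2 0 β)) (Qbar.mem_field2_right 0 β)]
  simp [embeddingInner, show (⟨0, _⟩ : Qbar.field2 0 β) = 0 from rfl]

theorem qInner_add_self (β γ : Qbar) :
    qInner (β + γ) (β + γ) = qInner β β + qInner γ γ + 2 * qInner β γ := by
  have hβ := Qbar.mem_field2_left β γ
  have hγ := Qbar.mem_field2_right β γ
  rw [qInner_eq_of_mem _ (add_mem hβ hγ) (add_mem hβ hγ), qInner_eq_of_mem _ hβ hβ,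
    qInner_eq_of_mem _ hγ hγ, qInner_eq_of_mem _ hβ hγ,
    show (⟨β + γ, _⟩ : Qbar.field2 β γ) = ⟨β, hβ⟩ + ⟨γ, hγ⟩ from rfl, embeddingInner_add_self]
  ring

theorem qInner_self_eq_sum_norm_sq (x : Qbar) :
    qInner x x = ((finrank ℚ (Qbar.field2 x x) : ℝ)⁻¹ *
      ∑ σ : Qbar.field2 x x →ₐ[ℚ] ℂ, ‖σ ⟨x, Qbar.mem_field2_left x x⟩‖ ^ 2 : ℝ) := by
  rw [qInner_eq_of_mem _ (Qbar.mem_field2_left x x) (Qbar.mem_field2_left x x),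
    embeddingInner_self]
  push_cast
  rfl

theorem one_le_qInner_self {x : Qbar} (hx : x ∈ Zbar) (hx0 : x ≠ 0) : 1 ≤ qInner x x := by
  rw [qInner_self_eq_sum_norm_sq, ← Complex.ofReal_one, Complex.real_le_real,
    le_inv_mul_iff₀ (Nat.cast_pos.2 finrank_pos), mul_one]
  exact finrank_le_sum_norm_sq (isIntegral_mk_of_mem_Zbar hx _)
    (ne_of_apply_ne Subtype.val hx0)

theorem IsRootOfUnity.qInner_self {ζ : Qbar} (h : IsRootOfUnity ζ) : qInner ζ ζ = 1 := by
  obtain ⟨n, hn, hζ⟩ := h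
  rw [qInner_self_eq_sum_norm_sq, sum_norm_sq_of_pow_eq_one hn.ne' (Subtype.ext hζ :
    (⟨ζ, Qbar.mem_field2_left ζ ζ⟩ : Qbar.field2 ζ ζ) ^ n = 1)]
  simp [finrank_pos.ne']

theorem IsRootOfUnity.of_qInner_self_eq_one {x : Qbar} (hx : x ∈ Zbar) (h : qInner x x = 1) :
    IsRootOfUnity x := by
  have hx0 : x ≠ 0 := by rintro rfl; simp [qInner_zero_left] at h
  rw [qInner_self_eq_sum_norm_sq, Complex.ofReal_eq_one,
    inv_mul_eq_one₀ (Nat.cast_ne_zero.2 finrank_pos.ne')] at h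
  obtain ⟨n, hn, hxn⟩ := exists_pow_eq_one_of_sum_norm_sq_eq_finrank
    (isIntegral_mk_of_mem_Zbar hx _) (ne_of_apply_ne Subtype.val hx0) h.symm
  exact ⟨n, hn, congrArg Subtype.val hxn⟩

namespace IsDecompositionOf

variable {α β γ : Qbar}

theorem two_le_qInner_self (h : IsDecompositionOf α β γ) (hβ : β ≠ 0)
    (hγ : γ ≠ 0) : 2 ≤ qInner α α := by
  obtain ⟨hβZ, hγZ, rfl, hpos⟩ := h
  rw [qInner_add_self]
  calc (2 : ℂ) = 1 + 1 + 2 * 0 := by norm_num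
    _ ≤ _ := by
      gcongr
      exacts [one_le_qInner_self hβZ hβ, one_le_qInner_self hγZ hγ]

theorem isRootOfUnity_of_qInner_self_eq_two (h : IsDecompositionOf α β γ)
    (hβ : β ≠ 0) (hγ : γ ≠ 0) (h2 : qInner α α = 2) : IsRootOfUnity β ∧ IsRootOfUnity γ := by
  obtain ⟨hβZ, hγZ, rfl, hpos⟩ := h
  rw [qInner_add_self] at h2
  have hsum : (qInner β β - 1) + ((qInner γ γ - 1) + 2 * qInner β γ) = 0 := by
    linear_combination h2
  obtain ⟨hβ1, hrest⟩ := (add_eq_zero_iff_of_nonneg (sub_nonneg.2 (one_le_qInner_self hβZ hβ))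
    (add_nonneg (sub_nonneg.2 (one_le_qInner_self hγZ hγ)) (mul_nonneg zero_le_two hpos))).1 hsum
  have hγ1 := ((add_eq_zero_iff_of_nonneg (sub_nonneg.2 (one_le_qInner_self hγZ hγ))
    (mul_nonneg zero_le_two hpos)).1 hrest).1
  exact ⟨.of_qInner_self_eq_one hβZ (sub_eq_zero.1 hβ1),
    .of_qInner_self_eq_one hγZ (sub_eq_zero.1 hγ1)⟩

end IsDecompositionOf

theorem qInner_eq_zero_of_qInner_add_self_eq_two {ζ ξ : Qbar} (hζ : IsRootOfUnity ζ)
    (hξ : IsRootOfUnity ξ) (h2 : qInner (ζ + ξ) (ζ + ξ) = 2) : qInner ζ ξ = 0 := by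
  rw [qInner_add_self, hζ.qInner_self, hξ.qInner_self] at h2
  linear_combination h2 / 2

-- If `‖u‖ = ‖v‖ = 1` then `u * v * conj (u + v) = u + v`, so the sum determines the product and
-- `{u, v}` is the root set of `X ^ 2 - (u + v) X + u v`.
theorem Complex.eq_and_eq_or_eq_and_eq_of_add_eq_add {u v u' v' : ℂ} (hu : ‖u‖ = 1)
    (hv : ‖v‖ = 1) (hu' : ‖u'‖ = 1) (hv' : ‖v'‖ = 1) (h : u + v = u' + v') (h0 : u + v ≠ 0) :
    (u' = u ∧ v' = v) ∨ (u' = v ∧ v' = u) := by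
  have hinv : ∀ z : ℂ, ‖z‖ = 1 → z * conj z = 1 := fun z hz => by
    rw [Complex.mul_conj', hz]; norm_num
  have hc : conj u + conj v = conj u' + conj v' := by simpa only [map_add] using congrArg conj h
  have hprod : u * v = u' * v' := by
    refine mul_right_cancel₀ ((map_ne_zero (starRingEnd ℂ)).2 h0) ?_
    rw [map_add]
    linear_combination v * hinv u hu + u * hinv v hv - v' * hinv u' hu' - u' * hinv v' hv' -
      u' * v' * hc + h
  have hroots : (u' - u) * (u' - v) = 0 := by linear_combination (-u') * h + hprod
  rcases mul_eq_zero.1 hroots with hu'u | hu'v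
  · obtain rfl := sub_eq_zero.1 hu'u
    exact .inl ⟨rfl, (add_left_cancel h).symm⟩
  · obtain rfl := sub_eq_zero.1 hu'v
    exact .inr ⟨rfl, (add_right_cancel (h.trans (add_comm _ _))).symm⟩

theorem IsRootOfUnity.eq_and_eq_or_eq_and_eq_of_add_eq_add {ζ ξ ζ' ξ' : Qbar}
    (hζ : IsRootOfUnity ζ) (hξ : IsRootOfUnity ξ) (hζ' : IsRootOfUnity ζ')
    (hξ' : IsRootOfUnity ξ') (h : ζ + ξ = ζ' + ξ') (h0 : ζ + ξ ≠ 0) :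
    (ζ' = ζ ∧ ξ' = ξ) ∨ (ζ' = ξ ∧ ξ' = ζ) := by
  have : Algebra.IsAlgebraic ℚ Qbar := AlgebraicClosure.isAlgebraic ℚ
  let j : Qbar →ₐ[ℚ] ℂ := IsAlgClosed.lift
  have hnorm : ∀ {z}, IsRootOfUnity z → ‖j z‖ = 1 := fun ⟨n, hn, hz⟩ =>
    Complex.norm_eq_one_of_pow_eq_one (by rw [← map_pow, hz, map_one]) hn.ne'
  rcases Complex.eq_and_eq_or_eq_and_eq_of_add_eq_add (hnorm hζ) (hnorm hξ) (hnorm hζ')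
    (hnorm hξ') (by simpa only [map_add] using congrArg j h) (by rwa [← map_add, map_ne_zero])
    with ⟨h₁, h₂⟩ | ⟨h₁, h₂⟩
  exacts [.inl ⟨j.injective h₁, j.injective h₂⟩, .inr ⟨j.injective h₁, j.injective h₂⟩]

theorem finrank_adjoin_le_two_of_isRootOfUnity {F : IntermediateField ℚ Qbar} {ζ ξ : Qbar}
    (hζ : IsRootOfUnity ζ) (hξ : IsRootOfUnity ξ) (hF : ζ + ξ ∈ F) (h0 : ζ + ξ ≠ 0) :
    finrank F F⟮ζ⟯ ≤ 2 := by
  classical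
  have : FiniteDimensional F F⟮ζ⟯ := adjoin.finiteDimensional (hζ.isIntegral F)
  have hζE : ζ ∈ F⟮ζ⟯ := mem_adjoin_simple_self F ζ
  have hαE : ζ + ξ ∈ F⟮ζ⟯ := F⟮ζ⟯.algebraMap_mem ⟨ζ + ξ, hF⟩
  have hξE : ξ ∈ F⟮ζ⟯ := by simpa using sub_mem hαE hζE
  have hmem : ∀ τ : F⟮ζ⟯ →ₐ[F] Qbar, τ ⟨ζ, hζE⟩ ∈ ({ζ, ξ} : Finset Qbar) := by
    intro τ
    have hτ : τ ⟨ζ, hζE⟩ + τ ⟨ξ, hξE⟩ = ζ + ξ := by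
      rw [← map_add]
      exact τ.commutes ⟨ζ + ξ, hF⟩
    rcases hζ.eq_and_eq_or_eq_and_eq_of_add_eq_add hξ (hζ.algHom_apply τ) (hξ.algHom_apply τ)
      hτ.symm h0 with ⟨h, -⟩ | ⟨h, -⟩ <;> simp [h]
  have hinj : Function.Injective fun τ : F⟮ζ⟯ →ₐ[F] Qbar =>
      (⟨τ ⟨ζ, hζE⟩, hmem τ⟩ : ({ζ, ξ} : Finset Qbar)) := fun τ₁ τ₂ h =>
    adjoin_algHom_ext F fun x hx => by
      obtain rfl := Set.mem_singleton_iff.1 hx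
      exact congrArg Subtype.val h
  calc finrank F F⟮ζ⟯ = Fintype.card (F⟮ζ⟯ →ₐ[F] Qbar) := (AlgHom.card F F⟮ζ⟯ Qbar).symm
    _ ≤ Fintype.card ({ζ, ξ} : Finset Qbar) := Fintype.card_le_of_injective _ hinj
    _ ≤ 2 := by simpa using Finset.card_le_two

theorem finrank_field2_eq_mul (α ζ : Qbar) :
    finrank ℚ (Qbar.field2 α ζ) =
      finrank ℚ (Qbar.field1 α) * finrank (Qbar.field1 α) (Qbar.field1 α)⟮ζ⟯ := by
  rw [Qbar.field2, ← adjoin_simple_adjoin_simple]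
  exact (finrank_mul_finrank ℚ (Qbar.field1 α) (Qbar.field1 α)⟮ζ⟯).symm

/-- (i) An algebraic integer `α` with `0 < q(α) < 2` is indecomposable.
(ii) If `q(α) = 2`, then `α` has a nontrivial decomposition iff `α` is a sum of two roots
of unity; such roots of unity are orthogonal, unique up to ordering, and of degree at most
`2` over `ℚ(α)` (expressed as `[ℚ(α,ζ):ℚ] ≤ 2·[ℚ(α):ℚ]`). -/
theorem q_lt_two_indecomposable_and_q_eq_two :
    (∀ α : Qbar, α ∈ Zbar → 0 < qInner α α → qInner α α < 2 → IsIndecomposable α) ∧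
    (∀ α : Qbar, α ∈ Zbar → qInner α α = 2 →
      ((∃ β γ : Qbar, IsDecompositionOf α β γ ∧ β ≠ 0 ∧ γ ≠ 0) ↔
        ∃ ζ ξ : Qbar, IsRootOfUnity ζ ∧ IsRootOfUnity ξ ∧ α = ζ + ξ) ∧
      (∀ ζ ξ : Qbar, IsRootOfUnity ζ → IsRootOfUnity ξ → α = ζ + ξ →
        qInner ζ ξ = 0 ∧
        (∀ ζ' ξ' : Qbar, IsRootOfUnity ζ' → IsRootOfUnity ξ' → α = ζ' + ξ' →
          (ζ' = ζ ∧ ξ' = ξ) ∨ (ζ' = ξ ∧ ξ' = ζ)) ∧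
        Module.finrank ℚ (Qbar.field2 α ζ) ≤ 2 * Module.finrank ℚ (Qbar.field1 α))) := by
  have ne_zero_of_qInner : ∀ {α : Qbar}, qInner α α ≠ 0 → α ≠ 0 := by
    rintro α hq rfl
    exact hq (qInner_zero_left 0)
  refine ⟨fun α hα hq0 hq2 => ⟨hα, ne_zero_of_qInner hq0.ne', fun β γ h => ?_⟩,
    fun α hα hq2 => ⟨⟨?_, ?_⟩, ?_⟩⟩
  · by_contra! hβγ
    exact lt_irrefl _ ((h.two_le_qInner_self hβγ.1 hβγ.2).trans_lt hq2)
  · rintro ⟨β, γ, h, hβ, hγ⟩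
    obtain ⟨hζ, hξ⟩ := h.isRootOfUnity_of_qInner_self_eq_two hβ hγ hq2
    exact ⟨β, γ, hζ, hξ, h.2.2.1⟩
  · rintro ⟨ζ, ξ, hζ, hξ, rfl⟩
    exact ⟨ζ, ξ, ⟨hζ.mem_Zbar, hξ.mem_Zbar, rfl,
      (qInner_eq_zero_of_qInner_add_self_eq_two hζ hξ hq2).ge⟩, hζ.ne_zero, hξ.ne_zero⟩
  · rintro ζ ξ hζ hξ rfl
    have h0 : ζ + ξ ≠ 0 := ne_zero_of_qInner (by rw [hq2]; exact two_ne_zero)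
    refine ⟨qInner_eq_zero_of_qInner_add_self_eq_two hζ hξ hq2,
      fun ζ' ξ' hζ' hξ' h => hζ.eq_and_eq_or_eq_and_eq_of_add_eq_add hξ hζ' hξ' h h0, ?_⟩
    rw [finrank_field2_eq_mul, mul_comm]
    exact Nat.mul_le_mul_right _ (finrank_adjoin_le_two_of_isRootOfUnity hζ hξ
      (mem_adjoin_simple_self ℚ _) h0)
end
end

section
/- (Szegő) Let α ∈ ℚ̄ and let r ∈ ℝ with r > 1. Then there exist infinitely many algebraic integers β ∈ Z̄ such that |α − β|_∞ < r. -/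
open scoped ComplexConjugate ComplexOrder

noncomputable section

/-- The max-norm `|γ|_∞ = max_{σ : ℚ(γ) → ℂ} |σ(γ)|`. -/
def maxAbs (γ : Qbar) : ℝ :=
  ⨆ σ : Qbar.field2 γ γ →ₐ[ℚ] ℂ, ‖σ ⟨γ, Qbar.mem_field2_left γ γ⟩‖


/-!
Put `K = ℚ(α)`, pick `q ≥ 1` with `q α` integral and `J` with `r ^ J (r - 1)` large. For
`m = q ^ J (J + 1)!` the coefficients of `(X - α) ^ m` in degrees `≥ m - J` are algebraic
integers, because `q ^ i ∣ (m choose i)` for `i ≤ J`. Rounding the lower coefficients one at a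
time, from the top down, against an integral basis of `K` adds a correction
`∑_{k < m - J} c_k (X - α) ^ k` whose coefficients have all conjugates bounded independently of
`m`; the result `H` is monic with integral coefficients. For every root `β` of `H + s` and every
embedding, `u = β - α` satisfies `|u| ^ m ≤ C ∑_{k < m - J} |u| ^ k`, which forces `|u| < r`.
Letting the shift `s` run through `0, …, #T` produces such a root outside any finite set `T`.
-/

open Polynomial Finset

theorem Polynomial.coeff_X_sub_C_pow_of_le {R : Type*} [CommRing R] (a : R) {n j : ℕ}
    (h : n ≤ j) : ((X - C a) ^ n).coeff j = if j = n then 1 else 0 := by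
  rw [sub_eq_add_neg, ← C_neg, coeff_X_add_C_pow]
  split_ifs with hj
  · simp [hj]
  · simp [Nat.choose_eq_zero_of_lt (lt_of_le_of_ne h (Ne.symm hj))]

theorem Polynomial.degree_sum_C_mul_X_sub_C_pow_lt {R : Type*} [CommRing R] (a : R) (n : ℕ)
    (c : ℕ → R) : (∑ k ∈ range n, C (c k) * (X - C a) ^ k).degree < (n : WithBot ℕ) := by
  rw [← mem_degreeLT]
  refine Submodule.sum_mem _ fun k hk => mem_degreeLT.mpr ?_
  calc _ ≤ 0 + (k : WithBot ℕ) := degree_mul_le_of_le degree_C_le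
        ((degree_pow_le_of_le k (degree_X_sub_C_le a)).trans_eq (mul_one _))
    _ < n := by rw [zero_add]; exact_mod_cast mem_range.mp hk

theorem Polynomial.exists_coeff_add_sum_C_mul_X_sub_C_pow_mem {R : Type*} [CommRing R]
    (O : Subring R) {B : Set R} (hB : ∀ ξ, ∃ c ∈ B, ξ + c ∈ O) (a : R) (n : ℕ) (P : R[X])
    (hP : ∀ j, n ≤ j → P.coeff j ∈ O) :
    ∃ c : ℕ → R, (∀ k < n, c k ∈ B) ∧
      ∀ j, (P + ∑ k ∈ range n, C (c k) * (X - C a) ^ k).coeff j ∈ O := by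
  induction n generalizing P with
  | zero => exact ⟨0, by simp, by simpa using hP⟩
  | succ n ih =>
    obtain ⟨c₀, hc₀B, hc₀O⟩ := hB (P.coeff n)
    obtain ⟨c, hcB, hcO⟩ := ih (P + C c₀ * (X - C a) ^ n) fun j hj => by
      rw [coeff_add, coeff_C_mul, coeff_X_sub_C_pow_of_le a hj]
      rcases hj.eq_or_lt with rfl | hlt
      · simpa using hc₀O
      · simpa [hlt.ne'] using hP j hlt
    refine ⟨Function.update c n c₀, fun k hk => ?_, fun j => ?_⟩
    · rcases (Nat.lt_succ_iff.mp hk).eq_or_lt with rfl | hlt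
      · simpa using hc₀B
      · simpa [hlt.ne] using hcB k hlt
    · have hsum : ∑ k ∈ range n, C (Function.update c n c₀ k) * (X - C a) ^ k
          = ∑ k ∈ range n, C (c k) * (X - C a) ^ k :=
        sum_congr rfl fun k hk => by rw [Function.update_of_ne (mem_range.mp hk).ne]
      rw [sum_range_succ, hsum, Function.update_self, ← add_assoc, add_right_comm]
      exact hcO j

theorem Nat.dvd_choose_of_mul_dvd {i d m : ℕ} (hi : 0 < i) (h : i * d ∣ m) :
    d ∣ m.choose i := by
  obtain ⟨i, rfl⟩ := Nat.exists_eq_add_one_of_ne_zero hi.ne'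
  rcases m with _ | m
  · simp
  obtain ⟨t, ht⟩ := h
  refine ⟨t * m.choose i, Nat.eq_of_mul_eq_mul_right (Nat.add_one_pos i) ?_⟩
  rw [← Nat.add_one_mul_choose_eq, ht]
  ring

theorem isIntegral_coeff_X_sub_C_pow {A : Type*} [CommRing A] {a : A} {q : ℕ}
    (hq : IsIntegral ℤ (q * a)) {J m j : ℕ} (hm : q ^ J * J.factorial ∣ m) (hj : m ≤ j + J) :
    IsIntegral ℤ (((X - C a) ^ m).coeff j) := by
  have hdvd : q ^ (m - j) ∣ m.choose j := by
    rcases Nat.eq_zero_or_pos (m - j) with h0 | hpos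
    · simp [h0]
    rw [← Nat.choose_symm (by omega)]
    refine Nat.dvd_choose_of_mul_dvd hpos (dvd_trans ?_ hm)
    rw [mul_comm]
    exact mul_dvd_mul (pow_dvd_pow q (by omega)) (Nat.dvd_factorial hpos (by omega))
  obtain ⟨D, hD⟩ := hdvd
  rw [sub_eq_add_neg, ← C_neg, coeff_X_add_C_pow, hD]
  have : (-a) ^ (m - j) * ((q ^ (m - j) * D : ℕ) : A) = (-(q * a)) ^ (m - j) * D := by
    push_cast; ring
  rw [this]
  exact (hq.neg.pow _).mul (isIntegral_natCast D)

theorem NumberField.exists_pos_natCast_mul_isIntegral {K : Type*} [Field K] [NumberField K]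
    (a : K) : ∃ q : ℕ, 0 < q ∧ IsIntegral ℤ (q * a) := by
  have ha : IsAlgebraic ℤ a :=
    (IsFractionRing.isAlgebraic_iff ℤ ℚ K).mpr (Algebra.IsAlgebraic.isAlgebraic a)
  obtain ⟨y, hy0, hy⟩ := ha.exists_integral_multiple
  refine ⟨y.natAbs, Int.natAbs_pos.mpr hy0, ?_⟩
  rcases Int.natAbs_eq y with h | h <;> rw [h] at hy
  · simpa [zsmul_eq_mul] using hy
  · simpa [zsmul_eq_mul] using hy.neg

theorem NumberField.exists_bounded_isIntegral_add (K : Type*) [Field K] [NumberField K] :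
    ∃ C : ℝ, ∀ ξ : K, ∃ c : K, (∀ σ : K →+* ℂ, ‖σ c‖ ≤ C) ∧ IsIntegral ℤ (ξ + c) := by
  set b := integralBasis K
  have hb : ∀ i, IsIntegral ℤ (b i) := fun i => by
    rw [integralBasis_apply]; exact RingOfIntegers.isIntegral_coe _
  refine ⟨∑ i, ∑ τ : K →+* ℂ, ‖τ (b i)‖, fun ξ => ?_⟩
  refine ⟨∑ i, ((round (b.repr ξ i) : ℚ) - b.repr ξ i) • b i, fun σ => ?_, ?_⟩
  · rw [map_sum]
    refine (norm_sum_le _ _).trans (sum_le_sum fun i _ => ?_)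
    rw [Rat.smul_def, map_mul, map_ratCast, norm_mul, Complex.norm_ratCast]
    have hround : |((((round (b.repr ξ i) : ℚ) - b.repr ξ i) : ℚ) : ℝ)| ≤ 1 := by
      rw [← Rat.cast_abs, abs_sub_comm]
      exact_mod_cast (abs_sub_round (b.repr ξ i)).trans (by norm_num)
    calc _ ≤ 1 * ‖σ (b i)‖ := by gcongr
      _ ≤ ∑ τ : K →+* ℂ, ‖τ (b i)‖ := by
        rw [one_mul]
        exact single_le_sum (f := fun τ : K →+* ℂ => ‖τ (b i)‖) (fun _ _ => norm_nonneg _)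
          (mem_univ σ)
  · have : ξ + ∑ i, ((round (b.repr ξ i) : ℚ) - b.repr ξ i) • b i
        = ∑ i, (round (b.repr ξ i) : ℤ) • b i := by
      nth_rewrite 1 [← b.sum_repr ξ]
      rw [← sum_add_distrib]
      refine sum_congr rfl fun i _ => ?_
      rw [← add_smul, add_sub_cancel, Int.cast_smul_eq_zsmul]
    rw [this]
    exact IsIntegral.sum _ fun i _ => (hb i).zsmul _

theorem lt_of_pow_add_le_mul_geom_sum {C r w : ℝ} {n J : ℕ} (hr : 1 < r) (hC : 0 ≤ C)
    (hJ : C < r ^ J * (r - 1)) (hw : 0 ≤ w) (h : w ^ (n + J) ≤ C * ∑ k ∈ range n, w ^ k) :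
    w < r := by
  by_contra! hrw
  have hwn : 0 < w ^ n := pow_pos (by linarith) n
  have hgrowth : r ^ J * (r - 1) ≤ w ^ J * (w - 1) := by gcongr
  have : w ^ n * (w ^ J * (w - 1)) ≤ w ^ n * C :=
    calc w ^ n * (w ^ J * (w - 1)) = w ^ (n + J) * (w - 1) := by ring
      _ ≤ C * (∑ k ∈ range n, w ^ k) * (w - 1) := by gcongr; linarith
      _ = C * (w ^ n - 1) := by rw [mul_assoc, geom_sum_mul]
      _ ≤ w ^ n * C := by nlinarith
  nlinarith [mul_lt_mul_of_pos_left (hJ.trans_le hgrowth) hwn]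

theorem norm_lt_of_pow_add_sum_add_eq_zero {𝕜 : Type*} [NormedField 𝕜] {u s : 𝕜} {d : ℕ → 𝕜}
    {C S r : ℝ} {n J : ℕ} (hr : 1 < r) (hn : 0 < n) (hd : ∀ k < n, ‖d k‖ ≤ C) (hs : ‖s‖ ≤ S)
    (hJ : C + S < r ^ J * (r - 1)) (h : u ^ (n + J) + ∑ k ∈ range n, d k * u ^ k + s = 0) :
    ‖u‖ < r := by
  have hC : 0 ≤ C := (norm_nonneg _).trans (hd 0 hn)
  have hS : 0 ≤ S := (norm_nonneg _).trans hs
  have hgeom : 1 ≤ ∑ k ∈ range n, ‖u‖ ^ k :=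
    single_le_sum (f := fun k => ‖u‖ ^ k) (fun _ _ => by positivity) (mem_range.mpr hn)
  have hu : u ^ (n + J) = -(∑ k ∈ range n, d k * u ^ k + s) := by linear_combination h
  refine lt_of_pow_add_le_mul_geom_sum (n := n) hr (by positivity) hJ (norm_nonneg u) ?_
  calc ‖u‖ ^ (n + J) = ‖∑ k ∈ range n, d k * u ^ k + s‖ := by
        rw [← norm_pow, hu, norm_neg]
    _ ≤ ∑ k ∈ range n, C * ‖u‖ ^ k + S := by
        refine (norm_add_le _ _).trans (add_le_add ((norm_sum_le _ _).trans ?_) hs)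
        refine sum_le_sum fun k hk => ?_
        rw [norm_mul, norm_pow]
        exact mul_le_mul_of_nonneg_right (hd k (mem_range.mp hk)) (by positivity)
    _ ≤ (C + S) * ∑ k ∈ range n, ‖u‖ ^ k := by
        rw [← mul_sum]; nlinarith

theorem NumberField.exists_monic_roots_norm_sub_lt (K : Type*) [Field K] [NumberField K] (a : K)
    {r : ℝ} (hr : 1 < r) (S : ℕ) :
    ∃ H : K[X], H.Monic ∧ 0 < H.degree ∧ (∀ j, IsIntegral ℤ (H.coeff j)) ∧
      ∀ s ≤ S, ∀ (σ : K →+* ℂ) (y : ℂ), eval₂ σ y (H + C (s : K)) = 0 → ‖y - σ a‖ < r := by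
  obtain ⟨q, hq0, hq⟩ := NumberField.exists_pos_natCast_mul_isIntegral a
  obtain ⟨C₀, hC₀⟩ := NumberField.exists_bounded_isIntegral_add K
  obtain ⟨J, hJ⟩ : ∃ J : ℕ, C₀ + S < r ^ J * (r - 1) := by
    obtain ⟨J, hJ⟩ := pow_unbounded_of_one_lt ((C₀ + S) / (r - 1)) hr
    exact ⟨J, by rwa [div_lt_iff₀ (by linarith)] at hJ⟩
  set m := q ^ J * (J + 1).factorial
  have hJm : J < m := (J.lt_succ_self.trans_le (Nat.self_le_factorial _)).trans_le
    (Nat.le_mul_of_pos_left _ (pow_pos hq0 J))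
  obtain ⟨c, hcB, hcO⟩ := Polynomial.exists_coeff_add_sum_C_mul_X_sub_C_pow_mem
    (integralClosure ℤ K).toSubring (B := {c | ∀ σ : K →+* ℂ, ‖σ c‖ ≤ C₀}) hC₀ a (m - J)
    ((X - C a) ^ m) fun j hj => isIntegral_coeff_X_sub_C_pow hq
      (mul_dvd_mul_left _ (Nat.factorial_dvd_factorial J.le_succ)) (by omega)
  set E := ∑ k ∈ range (m - J), C (c k) * (X - C a) ^ k
  have hE : E.degree < ((X - C a) ^ m).degree := by
    rw [degree_pow, degree_X_sub_C, nsmul_eq_mul, mul_one]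
    exact (degree_sum_C_mul_X_sub_C_pow_lt a _ c).trans_le (by exact_mod_cast Nat.sub_le m J)
  refine ⟨(X - C a) ^ m + E, ((monic_X_sub_C a).pow m).add_of_left hE, ?_, hcO, ?_⟩
  · rw [degree_add_eq_left_of_degree_lt hE, degree_pow, degree_X_sub_C, nsmul_one]
    exact_mod_cast (Nat.zero_le J).trans_lt hJm
  · intro s hs σ y hy
    have hroot : (y - σ a) ^ (m - J + J) + ∑ k ∈ range (m - J), σ (c k) * (y - σ a) ^ k
        + (s : ℂ) = 0 := by
      rw [Nat.sub_add_cancel hJm.le]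
      simpa [E, eval₂_finsetSum, eval₂_pow] using hy
    exact norm_lt_of_pow_add_sum_add_eq_zero hr (by omega) (fun k hk => hcB k hk σ)
      (by simpa using hs) hJ hroot

theorem Polynomial.exists_isRoot_add_natCast_notMem {F : Type*} [Field F] [IsAlgClosed F]
    [CharZero F] {p : F[X]} (hp : 0 < p.degree) (T : Finset F) :
    ∃ s ≤ #T, ∃ x ∉ T, (p + C (s : F)).IsRoot x := by
  have hroot (s : ℕ) : ∃ x, (p + C (s : F)).IsRoot x :=
    IsAlgClosed.exists_root _ (by rw [degree_add_C hp]; exact hp.ne')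
  choose x hx using hroot
  by_contra! hT
  have hxT (s : Fin (#T + 1)) : x s ∈ T := by
    by_contra h; exact hT s (by omega) (x s) h (hx s)
  obtain ⟨s, t, hst, heq⟩ := Fintype.exists_ne_map_eq_of_card_lt
    (fun s : Fin (#T + 1) => (⟨x s, hxT s⟩ : T)) (by simp)
  have hs := hx s
  have ht := hx t
  simp only [IsRoot, eval_add, eval_C] at hs ht
  rw [Subtype.mk.injEq] at heq
  rw [heq] at hs
  exact hst (Fin.ext (by exact_mod_cast (by linear_combination hs - ht : ((s : ℕ) : F) = t)))

theorem maxAbs_lt_of_forall_norm_lt {γ : Qbar} {R : ℝ} (h : ∀ τ : Qbar →ₐ[ℚ] ℂ, ‖τ γ‖ < R) :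
    maxAbs γ < R := by
  have : Algebra.IsAlgebraic ℚ Qbar := AlgebraicClosure.isAlgebraic ℚ
  have : Algebra.IsAlgebraic (Qbar.field2 γ γ) Qbar := .tower_top (K := ℚ) _
  have : Nonempty (Qbar.field2 γ γ →ₐ[ℚ] ℂ) := ⟨IsAlgClosed.lift⟩
  obtain ⟨σ, hσ⟩ := exists_eq_ciSup_of_finite
    (f := fun σ : Qbar.field2 γ γ →ₐ[ℚ] ℂ => ‖σ ⟨γ, Qbar.mem_field2_left γ γ⟩‖)
  obtain ⟨τ, rfl⟩ := IsAlgClosed.surjective_domRestrict_of_isAlgebraic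
    (K := ℚ) (E := Qbar) (M := ℂ) σ
  rw [maxAbs, ← hσ]
  exact h τ

theorem exists_isIntegral_notMem_forall_norm_sub_lt (α : Qbar) {r : ℝ} (hr : 1 < r)
    (T : Finset Qbar) :
    ∃ β ∉ T, IsIntegral ℤ β ∧ ∀ τ : Qbar →ₐ[ℚ] ℂ, ‖τ (α - β)‖ < r := by
  let K := Qbar.field2 α α
  have : NumberField K := ⟨⟩
  obtain ⟨H, hmonic, hdeg, hint, hroots⟩ :=
    NumberField.exists_monic_roots_norm_sub_lt K ⟨α, Qbar.mem_field2_left α α⟩ hr #T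
  set p := H.map (algebraMap K Qbar)
  have hpdeg : 0 < p.degree := by rwa [degree_map]
  obtain ⟨s, hs, β, hβT, hβ⟩ := exists_isRoot_add_natCast_notMem hpdeg T
  refine ⟨β, hβT, ?_, fun τ => ?_⟩
  · have hmonic' : (p + C (s : Qbar)).Monic :=
      (hmonic.map _).add_of_left (degree_C_le.trans_lt hpdeg)
    refine .of_aeval_monic_of_isIntegral_coeff hmonic' ?_ ?_ fun j => ?_
    · rw [natDegree_add_C]; exact (natDegree_pos_iff_degree_pos.mpr hpdeg).ne'
    · rw [hβ.eq_zero]; exact isIntegral_zero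
    · rw [coeff_add, coeff_map, coeff_C]
      refine (hint j).algebraMap.add ?_
      split_ifs
      exacts [isIntegral_natCast s, isIntegral_zero]
  · have hτβ :
        eval₂ ((τ : Qbar →+* ℂ).comp (algebraMap K Qbar)) (τ β) (H + C (s : K)) = 0 := by
      refine (hom_eval₂ _ _ (τ : Qbar →+* ℂ) β).symm.trans ?_
      rw [← eval_map, Polynomial.map_add, map_C, map_natCast, hβ.eq_zero, map_zero]
    rw [map_sub, norm_sub_rev]
    exact hroots s hs _ _ hτβ

/-- **Szegő.** For every `α ∈ Qbar` and real `r > 1` there are infinitely many algebraic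
integers `β` with `|α − β|_∞ < r`. -/
theorem szego (α : Qbar) (r : ℝ) (hr : 1 < r) :
    {β : Qbar | β ∈ Zbar ∧ maxAbs (α - β) < r}.Infinite := fun hfin => by
  obtain ⟨β, hβT, hβ, hnear⟩ := exists_isIntegral_notMem_forall_norm_sub_lt α hr hfin.toFinset
  exact hβT (hfin.mem_toFinset.mpr ⟨hβ, maxAbs_lt_of_forall_norm_lt hnear⟩)

end
end

section
/- (Fekete) Let α ∈ ℚ̄ and let r ∈ ℝ with 0 < r < 1. Then there exist only finitely many algebraic integers β ∈ Z̄ such that |β − α|_∞ ≤ r. -/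
/-! Let `K = ℚ(α)` and `n = [K(β) : K]`. The discriminant of the power basis of `β` over `K` is a
nonzero algebraic integer of `K`, so some conjugate of it has absolute value at least `1`. Over
each embedding of `K` it is the square of the Vandermonde determinant of the conjugates
`σ β - σ α`, which all have absolute value at most `r`; Leibniz's formula bounds it by
`(n! r^(n choose 2))²`. As `r < 1` this forces `n`, hence the degree of `β`, to be bounded. The
conjugates of `β` are bounded by `|α|_∞ + r`, so the minimal polynomials of such `β` have bounded
degree and bounded integer coefficients, and there are only finitely many of them. -/

open scoped ComplexConjugate ComplexOrder

noncomputable section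

open Polynomial Filter Topology Nat

theorem norm_le_maxAbs_of_mem_aroots {γ : Qbar} {z : ℂ} (hz : z ∈ (minpoly ℚ γ).aroots ℂ) :
    ‖z‖ ≤ maxAbs γ := by
  classical
  let γ' : Qbar.field2 γ γ := ⟨γ, Qbar.mem_field2_left γ γ⟩
  have hmin : minpoly ℚ γ' = minpoly ℚ γ :=
    (minpoly.algHom_eq (Qbar.field2 γ γ).val Subtype.val_injective γ').symm
  obtain ⟨σ, rfl⟩ : z ∈ Set.range fun σ : Qbar.field2 γ γ →ₐ[ℚ] ℂ => σ γ' := by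
    rwa [Algebra.IsAlgebraic.range_eval_eq_rootSet_minpoly, hmin, rootSet_def, Finset.mem_coe,
      Multiset.mem_toFinset]
  exact le_ciSup (f := fun σ : Qbar.field2 γ γ →ₐ[ℚ] ℂ => ‖σ γ'‖) (Set.finite_range _).bddAbove σ

theorem norm_le_maxAbs {F : Type*} [Field F] [CharZero F] (i : F →+* Qbar) (ψ : F →+* ℂ)
    (y : F) : ‖ψ y‖ ≤ maxAbs (i y) := by
  have hmin : minpoly ℚ (i y) = minpoly ℚ y := minpoly.algHom_eq i.toRatAlgHom i.injective y
  have hy : IsIntegral ℚ y := (isIntegral_algHom_iff i.toRatAlgHom i.injective).1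
    ((AlgebraicClosure.isAlgebraic ℚ).isAlgebraic (i y)).isIntegral
  refine norm_le_maxAbs_of_mem_aroots (mem_aroots.2 ⟨?_, ?_⟩) <;> rw [hmin]
  · exact minpoly.ne_zero hy
  · exact (aeval_algHom_apply ψ.toRatAlgHom y (minpoly ℚ y)).trans (by simp)

theorem norm_le_maxAbs_add_maxAbs_sub (α : Qbar) {β : Qbar} {z : ℂ}
    (hz : z ∈ (minpoly ℚ β).aroots ℂ) : ‖z‖ ≤ maxAbs α + maxAbs (β - α) := by
  classical
  let E := Qbar.field2 α β
  let a : E := ⟨α, Qbar.mem_field2_left α β⟩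
  let b : E := ⟨β, Qbar.mem_field2_right α β⟩
  have hmin : minpoly ℚ b = minpoly ℚ β := (minpoly.algHom_eq E.val Subtype.val_injective b).symm
  obtain ⟨ψ, rfl⟩ : z ∈ Set.range fun ψ : E →ₐ[ℚ] ℂ => ψ b := by
    rwa [Algebra.IsAlgebraic.range_eval_eq_rootSet_minpoly, hmin, rootSet_def, Finset.mem_coe,
      Multiset.mem_toFinset]
  calc ‖ψ b‖ = ‖ψ a + ψ (b - a)‖ := by rw [← map_add, add_sub_cancel]
    _ ≤ ‖ψ a‖ + ‖ψ (b - a)‖ := norm_add_le _ _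
    _ ≤ maxAbs α + maxAbs (β - α) :=
      add_le_add (norm_le_maxAbs E.val.toRingHom ψ.toRingHom a)
        (norm_le_maxAbs E.val.toRingHom ψ.toRingHom (b - a))

theorem Matrix.norm_det_vandermonde_le {𝕜 : Type*} [NormedField 𝕜] {n : ℕ} {v : Fin n → 𝕜}
    {r : ℝ} (hv : ∀ i, ‖v i‖ ≤ r) :
    ‖(Matrix.vandermonde v).det‖ ≤ n ! * r ^ n.choose 2 := by
  have hterm : ∀ σ : Equiv.Perm (Fin n),
      ‖((Equiv.Perm.sign σ : ℤ) : 𝕜) * ∏ i, Matrix.vandermonde v (σ i) i‖ ≤ r ^ n.choose 2 := by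
    intro σ
    have hsign : ‖((Equiv.Perm.sign σ : ℤ) : 𝕜)‖ = 1 := by
      rcases Int.units_eq_one_or (Equiv.Perm.sign σ) with hs | hs <;> simp [hs]
    rw [norm_mul, hsign, one_mul, norm_prod, Nat.choose_two_right, ← Finset.sum_range_id,
      ← Fin.sum_univ_eq_sum_range, ← Finset.prod_pow_eq_pow_sum]
    gcongr with i
    rw [Matrix.vandermonde_apply, norm_pow]
    exact pow_le_pow_left₀ (norm_nonneg _) (hv _) _
  calc ‖(Matrix.vandermonde v).det‖
      ≤ ∑ σ : Equiv.Perm (Fin n), r ^ n.choose 2 := by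
        rw [Matrix.det_apply']
        exact norm_sum_le_of_le _ fun σ _ => hterm σ
    _ = n ! * r ^ n.choose 2 := by simp [Fintype.card_perm]

theorem tendsto_factorial_mul_pow_choose_two {r : ℝ} (hr0 : 0 < r) (hr1 : r < 1) :
    Tendsto (fun n : ℕ => (n ! : ℝ) * r ^ n.choose 2) atTop (𝓝 0) := by
  set a : ℕ → ℝ := fun n => n ! * r ^ n.choose 2
  have ha : ∀ n, 0 < a n := fun n => by positivity
  have hratio : ∀ n, a (n + 1) = (n + 1) * r ^ n * a n := fun n => by
    simp only [a, Nat.choose_succ_succ', Nat.choose_one_right, pow_add, Nat.factorial_succ]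
    push_cast
    ring
  have hr : |r| < 1 := by rwa [abs_of_pos hr0]
  have hlim : Tendsto (fun n : ℕ => (n : ℝ) ^ 1 * r ^ n + r ^ n) atTop (𝓝 0) := by
    simpa using (tendsto_pow_const_mul_const_pow_of_abs_lt_one 1 hr).add
      (tendsto_pow_atTop_nhds_zero_of_abs_lt_one hr)
  refine (summable_of_ratio_test_tendsto_lt_one zero_lt_one
    (Eventually.of_forall fun n => (ha n).ne') (hlim.congr fun n => ?_)).tendsto_atTop_zero
  rw [Real.norm_of_nonneg (ha _).le, Real.norm_of_nonneg (ha _).le, hratio,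
    mul_div_cancel_right₀ _ (ha n).ne']
  ring

theorem one_le_factorial_mul_pow_choose_two_of_norm_sub_le {K L : Type*} [Field K]
    [NumberField K] [Field L] [Algebra K L] (pb : PowerBasis K L) (hgen : IsIntegral ℤ pb.gen)
    (c : K) {r : ℝ} (h : ∀ ψ : L →+* ℂ, ‖ψ (pb.gen - algebraMap K L c)‖ ≤ r) :
    1 ≤ (pb.dim ! : ℝ) * r ^ pb.dim.choose 2 := by
  have := pb.finite
  set d := Algebra.discr K pb.basis
  have hdint : IsIntegral ℤ d := Algebra.discr_isIntegral K fun i => by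
    rw [pb.basis_eq_pow]
    exact hgen.pow _
  obtain ⟨τ, hτ⟩ := NumberField.exists_conjugate_one_le_norm (K := K) (α := ⟨d, hdint⟩)
    fun h0 => Algebra.discr_not_zero_of_basis K pb.basis (congrArg Subtype.val h0)
  change 1 ≤ ‖τ d‖ at hτ
  let := τ.toAlgebra
  let e : Fin pb.dim ≃ (L →ₐ[K] ℂ) :=
    (Fintype.equivFinOfCardEq (by rw [AlgHom.card, pb.finrank])).symm
  have hdisc : τ d = (Matrix.vandermonde fun i => e i pb.gen - τ c).det ^ 2 := by
    rw [Matrix.det_vandermonde_sub, ← Matrix.det_transpose,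
      ← Algebra.embeddingsMatrixReindex_eq_vandermonde]
    exact Algebra.discr_eq_det_embeddingsMatrixReindex_pow_two K ℂ pb.basis e
  have hconj : ∀ i, ‖e i pb.gen - τ c‖ ≤ r := fun i => by
    simpa [(e i).commutes, RingHom.algebraMap_toAlgebra] using h (e i).toRingHom
  have hr : 0 ≤ r := (norm_nonneg _).trans (hconj ⟨0, pb.dim_pos⟩)
  refine (one_le_pow_iff_of_nonneg (by positivity) two_ne_zero).1 (hτ.trans ?_)
  rw [hdisc, norm_pow]
  exact pow_le_pow_left₀ (norm_nonneg _) (Matrix.norm_det_vandermonde_le hconj) 2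

open IntermediateField in
theorem natDegree_minpoly_le_of_maxAbs_sub_le (α : Qbar) {β : Qbar} (hβ : IsIntegral ℤ β)
    {r : ℝ} (hβr : maxAbs (β - α) ≤ r) {B : ℕ}
    (hB : ∀ n : ℕ, 1 ≤ (n ! : ℝ) * r ^ n.choose 2 → n ≤ B) :
    (minpoly ℚ β).natDegree ≤ (minpoly ℚ α).natDegree * B := by
  have halg : ∀ x : Qbar, IsIntegral ℚ x := fun x =>
    ((AlgebraicClosure.isAlgebraic ℚ).isAlgebraic x).isIntegral
  let K := ℚ⟮α⟯
  have : FiniteDimensional ℚ K := adjoin.finiteDimensional (halg α)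
  have : NumberField K := ⟨⟩
  have hβK : IsIntegral K β := (halg β).tower_top
  let L := K⟮β⟯
  have : FiniteDimensional K L := adjoin.finiteDimensional hβK
  have : FiniteDimensional ℚ L := Module.Finite.trans K L
  let pb := adjoin.powerBasis hβK
  have hdim : pb.dim ≤ B := by
    refine hB _ (one_le_factorial_mul_pow_choose_two_of_norm_sub_le pb ?_ (AdjoinSimple.gen ℚ α)
      fun ψ => (norm_le_maxAbs L.val.toRingHom ψ _).trans (le_of_eq_of_le ?_ hβr))
    · exact (isIntegral_algHom_iff (L.val.restrictScalars ℤ) Subtype.val_injective).1 hβ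
    · simp [pb]
  calc (minpoly ℚ β).natDegree = (minpoly ℚ (AdjoinSimple.gen K β)).natDegree :=
        congrArg natDegree
          (minpoly.algHom_eq (L.val.restrictScalars ℚ) Subtype.val_injective (AdjoinSimple.gen K β))
    _ ≤ Module.finrank ℚ L := minpoly.natDegree_le _
    _ = (minpoly ℚ α).natDegree * pb.dim := by
        have : Module.Free K L := Module.Free.of_divisionRing K L
        rw [← Module.finrank_mul_finrank ℚ K L, adjoin.finrank (halg α), pb.finrank]
    _ ≤ (minpoly ℚ α).natDegree * B := Nat.mul_le_mul_left _ hdim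

theorem finite_setOf_isIntegral_natDegree_le_of_norm_aroots_le {K : Type*} [Field K] [CharZero K]
    (D : ℕ) (H : ℝ) :
    {x : K | IsIntegral ℤ x ∧ (minpoly ℚ x).natDegree ≤ D ∧
      ∀ z ∈ (minpoly ℚ x).aroots ℂ, ‖z‖ ≤ H}.Finite := by
  classical
  let C := ⌈max H 1 ^ D * D.choose (D / 2)⌉₊
  refine (bUnion_roots_finite (algebraMap ℤ K) D (Set.finite_Icc (-C : ℤ) C)).subset ?_
  rintro x ⟨hx, hdeg, hroots⟩
  have hmap := minpoly.isIntegrallyClosed_eq_field_fractions' ℚ hx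
  simp_rw [Set.mem_iUnion]
  refine ⟨minpoly ℤ x, ⟨?_, fun i => ?_⟩, mem_rootSet.2 ⟨minpoly.ne_zero hx, minpoly.aeval ℤ x⟩⟩
  · rwa [← (minpoly.monic hx).natDegree_map (algebraMap ℤ ℚ), ← hmap]
  · have hcoeff : ‖(minpoly ℚ x).coeff i‖ ≤ max H 1 ^ D * D.choose (D / 2) := by
      rw [← norm_algebraMap' ℂ, ← coeff_map (algebraMap ℚ ℂ)]
      exact coeff_bdd_of_roots_le _ (minpoly.monic hx.tower_top) (IsAlgClosed.splits _) hdeg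
        hroots i
    rw [Set.mem_Icc, ← abs_le, ← @Int.cast_le ℝ]
    refine (Eq.trans_le ?_ hcoeff).trans (Nat.le_ceil _)
    rw [hmap, coeff_map, eq_intCast, Int.norm_cast_rat, Int.norm_eq_abs, Int.cast_abs]

/-- **Fekete.** For every `α ∈ Qbar` and real `0 < r < 1` there are only finitely many
algebraic integers `β` with `|β − α|_∞ ≤ r`. -/
theorem fekete (α : Qbar) (r : ℝ) (hr0 : 0 < r) (hr1 : r < 1) :
    {β : Qbar | β ∈ Zbar ∧ maxAbs (β - α) ≤ r}.Finite := by
  obtain ⟨B, hB⟩ := eventually_atTop.1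
    ((tendsto_factorial_mul_pow_choose_two hr0 hr1).eventually_lt_const zero_lt_one)
  refine (finite_setOf_isIntegral_natDegree_le_of_norm_aroots_le
    ((minpoly ℚ α).natDegree * B) (maxAbs α + r)).subset ?_
  rintro β ⟨hβ, hβr⟩
  refine ⟨hβ, natDegree_minpoly_le_of_maxAbs_sub_le α hβ hβr fun n hn => ?_,
    fun z hz => (norm_le_maxAbs_add_maxAbs_sub α hz).trans (by linarith)⟩
  exact le_of_not_gt fun hBn => (hB n hBn.le).not_ge hn

end
end

section
/- Let H be a real Hilbert space and let Λ ⊆ H be a discrete additive subgroup. Then Λ is almost free as an abelian group: every countable subgroup of Λ is a free abelian group (a free ℤ-module). -/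
/-!
Enumerate the countable group `Λ'` and let `Vₙ` be the real span of its first `n` elements.
The elements of `Λ'` lying in `Vₙ` form a discrete subgroup `Nₙ` of a finite-dimensional space,
hence a finitely generated one, and `Λ' ⧸ Nₙ` is torsion-free because `Vₙ` is a vector space.
So `Nₙ₊₁ ⧸ Nₙ` is free, any basis of `Nₙ` extends to a basis of `Nₙ₊₁`, and the union of
the resulting increasing chain of bases is a basis of `Λ'`.
-/

open Submodule Set

section PID

variable {R M : Type*} [CommRing R] [IsDomain R] [IsPrincipalIdealRing R]
  [AddCommGroup M] [Module R M]

theorem Submodule.exists_linearIndepOn_disjoint_sup_eq {P Q : Submodule R M} (hPQ : P ≤ Q)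
    [Module.Finite R Q] [Module.IsTorsionFree R (M ⧸ P)] :
    ∃ T : Set M, LinearIndepOn R id T ∧ Disjoint P (span R T) ∧ P ⊔ span R T = Q := by
  set P' := P.comap Q.subtype
  have : Module.IsTorsionFree R (Q ⧸ P') := by
    refine Function.Injective.moduleIsTorsionFree (P'.mapQ P Q.subtype le_rfl) ?_ (map_smul _)
    rw [← LinearMap.ker_eq_bot, ker_mapQ, mkQ_map_self]
  -- `Q ⧸ P'` is free, so the quotient map splits
  obtain ⟨σ, hσ⟩ := Module.projective_lifting_property P'.mkQ LinearMap.id P'.mkQ_surjective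
  have hσ' (z : Q ⧸ P') : P'.mkQ (σ z) = z := LinearMap.congr_fun hσ z
  set s := Q.subtype ∘ₗ σ
  have hs : LinearMap.ker s = ⊥ := by
    refine LinearMap.ker_eq_bot.2 fun z w h => ?_
    rw [← hσ' z, ← hσ' w, Subtype.ext h]
  set b := Module.Free.chooseBasis R (Q ⧸ P')
  refine ⟨range (s ∘ b), (b.linearIndependent.map' s hs).linearIndepOn_id, ?_⟩
  rw [range_comp, span_image, b.span_eq, Submodule.map_top]
  refine ⟨disjoint_iff_inf_le.2 ?_, le_antisymm (sup_le hPQ ?_) fun x hx => ?_⟩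
  · rintro _ ⟨hP, z, rfl⟩
    have : σ z ∈ P' := hP
    rw [← hσ' z, mkQ_apply, (Quotient.mk_eq_zero P').2 this, map_zero, mem_bot]
  · rintro _ ⟨z, rfl⟩
    exact (σ z).2
  · set q : Q := ⟨x, hx⟩
    have hq : q - σ (P'.mkQ q) ∈ P' := by
      rw [← Quotient.mk_eq_zero, Quotient.mk_sub, ← mkQ_apply, ← mkQ_apply, hσ', sub_self]
    have : x = (q - σ (P'.mkQ q) : Q) + s (P'.mkQ q) := by simp [s, q]
    exact this ▸ add_mem_sup hq ⟨_, rfl⟩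

theorem Module.free_of_monotone_of_isTorsionFree_quotient (N : ℕ → Submodule R M)
    (hN : Monotone N) (hN₀ : N 0 = ⊥) (hN_top : ⨆ n, N n = ⊤)
    (hfin : ∀ n, Module.Finite R (N n)) (htf : ∀ n, Module.IsTorsionFree R (M ⧸ N n)) :
    Module.Free R M := by
  choose T hT_li hT_disj hT_sup using fun n =>
    exists_linearIndepOn_disjoint_sup_eq (hN n.le_succ) (Q := N (n + 1))
  set S : ℕ → Set M := fun n => ⋃ k < n, T k
  have hS (n : ℕ) : LinearIndepOn R id (S n) ∧ span R (S n) = N n := by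
    induction n with
    | zero => simp [S, hN₀, linearIndepOn_empty]
    | succ n ih =>
      simp only [S, biUnion_lt_succ, span_union]
      rw [ih.2, hT_sup]
      exact ⟨ih.1.union (hT_li n) (by simpa [ih.2] using hT_disj n), rfl⟩
  have hS_mono : Monotone S := fun _ _ hmn =>
    biUnion_mono (fun _ hk => lt_of_lt_of_le hk hmn) fun _ _ => le_rfl
  have hli : LinearIndepOn R id (⋃ n, S n) :=
    linearIndepOn_iUnion_of_directed hS_mono.directed_le fun n => (hS n).1
  refine Module.Free.of_basis (Module.Basis.mk hli.linearIndependent ?_)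
  rw [show range (fun x : ⋃ n, S n => id (x : M)) = ⋃ n, S n from Subtype.range_coe,
    span_iUnion, ← hN_top]
  exact iSup_mono fun n => (hS n).2.ge

end PID

theorem AddMonoidHom.moduleFinite_of_forall_le_norm {A E : Type*} [AddCommGroup A]
    [NormedAddCommGroup E] [NormedSpace ℝ E] [FiniteDimensional ℝ E] (f : A →+ E) {ε : ℝ}
    (hε : 0 < ε) (hf : ∀ x, x ≠ 0 → ε ≤ ‖f x‖) : Module.Finite ℤ A := by
  have hinj : Function.Injective f.toIntLinearMap := by
    refine (injective_iff_map_eq_zero _).2 fun x (hx : f x = 0) => by_contra fun h => ?_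
    simpa [hx, hε.not_ge] using hf x h
  have : DiscreteTopology (LinearMap.range f.toIntLinearMap) := by
    refine DiscreteTopology.of_forall_le_norm hε ?_
    rintro ⟨_, x, rfl⟩ hx
    exact hf x fun h => hx (by ext; simp [h])
  exact Module.Finite.equiv (LinearEquiv.ofInjective _ hinj).symm

theorem Submodule.isTorsionFree_quotient_comap_restrictScalars {K E A : Type*} [Field K]
    [CharZero K] [AddCommGroup E] [Module K E] [AddCommGroup A] (V : Submodule K E)
    (f : A →ₗ[ℤ] E) : Module.IsTorsionFree ℤ (A ⧸ (V.restrictScalars ℤ).comap f) := by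
  refine .of_smul_eq_zero fun k q hq => or_iff_not_imp_left.2 fun hk => ?_
  obtain ⟨x, rfl⟩ := mkQ_surjective _ q
  rw [← map_smul, mkQ_apply, Quotient.mk_eq_zero, mem_comap, map_zsmul,
    ← Int.cast_smul_eq_zsmul K] at hq
  rw [mkQ_apply, Quotient.mk_eq_zero, mem_comap]
  simpa [hk] using V.smul_mem (k : K)⁻¹ hq

theorem AddMonoidHom.moduleFree_of_forall_le_norm {A E : Type*} [AddCommGroup A] [Countable A]
    [NormedAddCommGroup E] [NormedSpace ℝ E] (f : A →+ E) {ε : ℝ} (hε : 0 < ε)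
    (hf : ∀ x, x ≠ 0 → ε ≤ ‖f x‖) : Module.Free ℤ A := by
  obtain ⟨e, he⟩ := exists_surjective_nat A
  set V : ℕ → Submodule ℝ E := fun n => span ℝ (f ∘ e '' Iio n)
  set N : ℕ → Submodule ℤ A := fun n => ((V n).restrictScalars ℤ).comap f.toIntLinearMap
  refine Module.free_of_monotone_of_isTorsionFree_quotient N
    (fun m n hmn => comap_mono (span_mono (image_mono (Iio_subset_Iio hmn))))
    (eq_bot_iff.2 fun x (hx : f x ∈ V 0) => ?_) (eq_top_iff.2 fun x _ => ?_) (fun n => ?_)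
    (fun n => (V n).isTorsionFree_quotient_comap_restrictScalars f.toIntLinearMap)
  · simp only [V, ← Nat.bot_eq_zero, Iio_bot, image_empty, span_empty, mem_bot] at hx
    exact by_contra fun h => by simpa [hx, hε.not_ge] using hf x h
  · obtain ⟨n, rfl⟩ := he x
    exact mem_iSup_of_mem (n + 1) (subset_span ⟨n, Nat.lt_succ_self n, rfl⟩)
  · have : FiniteDimensional ℝ (V n) := .span_of_finite ℝ ((finite_Iio n).image _)
    refine (AddMonoidHom.mk' (fun x : N n => (⟨f x.1, x.2⟩ : V n)) fun x y =>
      Subtype.ext (by simp)).moduleFinite_of_forall_le_norm hε fun x hx => ?_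
    exact hf x.1 (by simpa using hx)

theorem discrete_subgroup_almost_free_general (H : Type*) [NormedAddCommGroup H]
    [InnerProductSpace ℝ H] (Λ : AddSubgroup H)
    (hdisc : ∃ r > (0 : ℝ), ∀ x ∈ Λ, x ≠ 0 → r ≤ ‖x‖ ^ 2)
    (Λ' : AddSubgroup H) (hle : Λ' ≤ Λ) (hcount : Countable Λ') :
    Module.Free ℤ Λ' := by
  obtain ⟨r, hr, hnorm⟩ := hdisc
  refine Λ'.subtype.moduleFree_of_forall_le_norm (Real.sqrt_pos.2 hr) fun x hx => ?_
  exact (Real.sqrt_le_left (norm_nonneg _)).2 (hnorm x (hle x.2) (by simpa using hx))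

/-- **Discrete subgroups of real Hilbert spaces are almost free**: every countable subgroup
of a discrete additive subgroup of a real Hilbert space is a free abelian group. -/
theorem discrete_subgroup_almost_free (H : Type*) [NormedAddCommGroup H]
    [InnerProductSpace ℝ H] [CompleteSpace H] (Λ : AddSubgroup H)
    (hdisc : ∃ r > (0 : ℝ), ∀ x ∈ Λ, x ≠ 0 → r ≤ ‖x‖ ^ 2)
    (Λ' : AddSubgroup H) (hle : Λ' ≤ Λ) (hcount : Countable Λ') :
    Module.Free ℤ Λ' :=
  discrete_subgroup_almost_free_general H Λ hdisc Λ' hle hcount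
end

section
/- Let H be a real Hilbert space, let Λ ⊆ H be a discrete additive subgroup, and define the Voronoi cell vor(Λ) = {z ∈ H : ∀ x ∈ Λ with x ≠ 0, ‖z‖ < ‖z − x‖}. Let indec(Λ) be the set of indecomposable elements of Λ. Then vor(Λ) = {z ∈ H : ∀ x ∈ indec(Λ), ‖z‖ < ‖z − x‖}, and for every subset S ⊆ Λ satisfying vor(Λ) = {z ∈ H : ∀ x ∈ S, ‖z‖ < ‖z − x‖} one has indec(Λ) ⊆ S; that is, indec(Λ) is the unique inclusion-minimal such subset. -/
open scoped RealInnerProductSpace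

/-- `x` is an indecomposable element of the discrete subgroup `Λ` of a real Hilbert space. -/
def AddSubgroup.IsIndecElem {H : Type*} [NormedAddCommGroup H] [InnerProductSpace ℝ H]
    (Λ : AddSubgroup H) (x : H) : Prop :=
  x ∈ Λ ∧ x ≠ 0 ∧ ∀ y z : H, y ∈ Λ → z ∈ Λ → x = y + z → 0 ≤ ⟪y, z⟫ → y = 0 ∨ z = 0

/-- The (open) Voronoi cell of the subgroup `Λ`. -/
def AddSubgroup.vor {H : Type*} [NormedAddCommGroup H] [InnerProductSpace ℝ H]
    (Λ : AddSubgroup H) : Set H :=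
  {z : H | ∀ x ∈ Λ, x ≠ 0 → ‖z‖ < ‖z - x‖}

/-!
`‖z‖ < ‖z - x‖` says `2⟪z, x⟫ < ‖x‖²`, and these strict inequalities for `y` and
`w` with `⟪y, w⟫ ≥ 0` add up to the one for `y + w`. A decomposition `x = y + w` with
`⟪y, w⟫ ≥ 0` and `y, w ≠ 0` lowers `‖·‖²` by at least the discreteness constant on each
summand, so induction on `‖x‖²` reduces every nonzero lattice vector to indecomposable ones.
Conversely, for indecomposable `v` the point `v / 2` is equidistant from `0` and `v`, hence
outside the Voronoi cell, so some `x ∈ S` has `‖v/2 - x‖ ≤ ‖v/2‖`, i.e. `⟪x, v - x⟫ ≥ 0`;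
as `0 ∉ S`, indecomposability forces `x = v`.
-/

section InnerProduct

variable {H : Type*} [NormedAddCommGroup H] [InnerProductSpace ℝ H]

lemma norm_lt_norm_sub_iff (z x : H) : ‖z‖ < ‖z - x‖ ↔ 2 * ⟪z, x⟫ < ‖x‖ ^ 2 := by
  rw [← sq_lt_sq₀ (norm_nonneg _) (norm_nonneg _), norm_sub_sq_real]
  constructor <;> intro h <;> linarith

lemma norm_lt_norm_sub_add {z y w : H} (hyw : 0 ≤ ⟪y, w⟫) (hy : ‖z‖ < ‖z - y‖)
    (hw : ‖z‖ < ‖z - w‖) : ‖z‖ < ‖z - (y + w)‖ := by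
  rw [norm_lt_norm_sub_iff] at hy hw ⊢
  rw [inner_add_right, norm_add_sq_real]
  linarith

lemma sq_norm_add_le_of_inner_nonneg {y w : H} (hyw : 0 ≤ ⟪y, w⟫) :
    ‖y‖ ^ 2 + ‖w‖ ^ 2 ≤ ‖y + w‖ ^ 2 := by
  rw [norm_add_sq_real]
  linarith

lemma inner_sub_nonneg_of_norm_half_sub_le {v x : H}
    (h : ‖(1 / 2 : ℝ) • v - x‖ ≤ ‖(1 / 2 : ℝ) • v‖) : 0 ≤ ⟪x, v - x⟫ := by
  rw [← not_lt, norm_lt_norm_sub_iff, real_inner_smul_left] at h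
  rw [inner_sub_right, real_inner_self_eq_norm_sq, real_inner_comm]
  linarith

end InnerProduct

namespace AddSubgroup

variable {H : Type*} [NormedAddCommGroup H] [InnerProductSpace ℝ H] (Λ : AddSubgroup H)

lemma not_isIndecElem_iff {x : H} (hx : x ∈ Λ) (hx0 : x ≠ 0) :
    ¬ Λ.IsIndecElem x ↔
      ∃ y ∈ Λ, ∃ w ∈ Λ, x = y + w ∧ 0 ≤ ⟪y, w⟫ ∧ y ≠ 0 ∧ w ≠ 0 := by
  simp [IsIndecElem, hx, hx0]

lemma induction_on_isIndecElem {r : ℝ} (hr : 0 < r) (hdisc : ∀ x ∈ Λ, x ≠ 0 → r ≤ ‖x‖ ^ 2)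
    {P : H → Prop} (indec : ∀ x, Λ.IsIndecElem x → P x)
    (add : ∀ y ∈ Λ, ∀ w ∈ Λ, 0 ≤ ⟪y, w⟫ → P y → P w → P (y + w)) :
    ∀ x ∈ Λ, x ≠ 0 → P x := by
  suffices key : ∀ n : ℕ, ∀ x ∈ Λ, x ≠ 0 → ‖x‖ ^ 2 ≤ n * r → P x by
    intro x hx hx0
    obtain ⟨n, hn⟩ := exists_nat_ge (‖x‖ ^ 2 / r)
    exact key n x hx hx0 ((div_le_iff₀ hr).mp hn)
  intro n
  induction n with
  | zero =>
    intro x hx hx0 hle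
    have := hdisc x hx hx0
    simp only [CharP.cast_eq_zero, zero_mul] at hle
    linarith
  | succ n ih =>
    intro x hx hx0 hle
    by_cases hind : Λ.IsIndecElem x
    · exact indec x hind
    obtain ⟨y, hy, w, hw, rfl, hyw, hy0, hw0⟩ := (Λ.not_isIndecElem_iff hx hx0).mp hind
    have hsum := sq_norm_add_le_of_inner_nonneg hyw
    have hry := hdisc y hy hy0
    have hrw := hdisc w hw hw0
    push_cast at hle
    exact add y hy w hw hyw (ih y hy hy0 (by linarith)) (ih w hw hw0 (by linarith))

lemma zero_mem_vor : (0 : H) ∈ Λ.vor := fun x _ hx0 => by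
  simpa using norm_pos_iff.mpr hx0

lemma half_smul_notMem_vor {v : H} (hv : v ∈ Λ) (hv0 : v ≠ 0) :
    (1 / 2 : ℝ) • v ∉ Λ.vor := by
  intro h
  have hlt := h v hv hv0
  have hmid : (1 / 2 : ℝ) • v - v = -((1 / 2 : ℝ) • v) := by module
  rw [hmid, norm_neg] at hlt
  exact lt_irrefl _ hlt

lemma vor_eq_of_discrete {r : ℝ} (hr : 0 < r) (hdisc : ∀ x ∈ Λ, x ≠ 0 → r ≤ ‖x‖ ^ 2) :
    Λ.vor = {z : H | ∀ x, Λ.IsIndecElem x → ‖z‖ < ‖z - x‖} := by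
  ext z
  refine ⟨fun hz x hx => hz x hx.1 hx.2.1, fun hz => ?_⟩
  exact Λ.induction_on_isIndecElem hr hdisc hz
    fun y _ w _ hyw => norm_lt_norm_sub_add hyw

lemma IsIndecElem.mem_of_vor_eq {v : H} (hv : Λ.IsIndecElem v) {S : Set H}
    (hSΛ : S ⊆ Λ) (hS : Λ.vor = {z : H | ∀ x ∈ S, ‖z‖ < ‖z - x‖}) : v ∈ S := by
  obtain ⟨hvΛ, hv0, hvind⟩ := hv
  have hS0 : (0 : H) ∉ S := fun h0 => by
    have := (hS ▸ Λ.zero_mem_vor) 0 h0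
    simp at this
  have hhalf := Λ.half_smul_notMem_vor hvΛ hv0
  simp only [hS, Set.mem_ofPred_eq, not_forall, not_lt] at hhalf
  obtain ⟨x, hxS, hle⟩ := hhalf
  rcases hvind x (v - x) (hSΛ hxS) (Λ.sub_mem hvΛ (hSΛ hxS)) (by abel)
      (inner_sub_nonneg_of_norm_half_sub_le hle) with hx0 | hvx
  · exact absurd (hx0 ▸ hxS) hS0
  · rwa [sub_eq_zero.mp hvx]

end AddSubgroup

theorem voronoi_eq_indec_cut_general (H : Type*) [NormedAddCommGroup H] [InnerProductSpace ℝ H]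
    (Λ : AddSubgroup H)
    (hdisc : ∃ r > (0 : ℝ), ∀ x ∈ Λ, x ≠ 0 → r ≤ ‖x‖ ^ 2) :
    Λ.vor = {z : H | ∀ x, Λ.IsIndecElem x → ‖z‖ < ‖z - x‖} ∧
    ∀ S : Set H, S ⊆ (Λ : Set H) →
      Λ.vor = {z : H | ∀ x ∈ S, ‖z‖ < ‖z - x‖} → {x : H | Λ.IsIndecElem x} ⊆ S := by
  obtain ⟨r, hr, hd⟩ := hdisc
  exact ⟨Λ.vor_eq_of_discrete hr hd, fun S hSΛ hS _ hv => hv.mem_of_vor_eq Λ hSΛ hS⟩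

/-- The Voronoi cell of a discrete subgroup `Λ` of a real Hilbert space is cut out by the
indecomposable elements of `Λ`, and `indec(Λ)` is contained in every subset `S ⊆ Λ` cutting
out the Voronoi cell; i.e. it is the unique inclusion-minimal such set. -/
theorem voronoi_eq_indec_cut (H : Type*) [NormedAddCommGroup H] [InnerProductSpace ℝ H]
    [CompleteSpace H] (Λ : AddSubgroup H)
    (hdisc : ∃ r > (0 : ℝ), ∀ x ∈ Λ, x ≠ 0 → r ≤ ‖x‖ ^ 2) :
    Λ.vor = {z : H | ∀ x, Λ.IsIndecElem x → ‖z‖ < ‖z - x‖} ∧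
    ∀ S : Set H, S ⊆ (Λ : Set H) →
      Λ.vor = {z : H | ∀ x ∈ S, ‖z‖ < ‖z - x‖} → {x : H | Λ.IsIndecElem x} ⊆ S :=
  voronoi_eq_indec_cut_general H Λ hdisc
end
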